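/- Let U ⊆ ℝ² be open, g : U → (symmetric positive definite 2×2 real matrices) smooth, and u : U → ℝ² a smooth covector field with uᵀ g⁻¹ u = 1 at every point. Set k = 2 u uᵀ − g. Then for every a ∈ {1,2} and every point of U the identity Σ_b u^b ∇_b u_a − (Σ_b ∇_b u^b) u_a = −½ Σ_b k^b_a (div k)_b holds, where u^a = (g⁻¹u)^a, ∇_b u_a = ∂_b u_a − Σ_c Γ^c_{ba} u_c, ∇_b u^a = ∂_b u^a + Σ_c Γ^a_{bc} u^c. -/

import Mathlib

open Matrix
open scoped BigOperators

/-- Partial derivative of a map in the `a`-th coordinate direction of `ℝ²`. -/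
noncomputable def pd {E : Type*} [NormedAddCommGroup E] [NormedSpace ℝ E]
    (a : Fin 2) (f : (Fin 2 → ℝ) → E) (p : Fin 2 → ℝ) : E :=
  fderiv ℝ f p (Pi.single a 1)

lemma pd_congr {f h : (Fin 2 → ℝ) → ℝ} {p : Fin 2 → ℝ} (a : Fin 2)
    (hfh : f =ᶠ[nhds p] h) : pd a f p = pd a h p := by
  unfold pd; rw [hfh.fderiv_eq]

lemma pd_eqOn {U : Set (Fin 2 → ℝ)} (hU : IsOpen U) {p : Fin 2 → ℝ} (hp : p ∈ U)
    {f h : (Fin 2 → ℝ) → ℝ} (a : Fin 2) (hfh : ∀ q ∈ U, f q = h q) : pd a f p = pd a h p :=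
  pd_congr a (Filter.eventuallyEq_of_mem (hU.mem_nhds hp) hfh)

lemma pd_const (a : Fin 2) (c : ℝ) (p : Fin 2 → ℝ) : pd a (fun _ => c) p = 0 := by
  simp [pd]

lemma pd_add {f h : (Fin 2 → ℝ) → ℝ} {p : Fin 2 → ℝ} (a : Fin 2)
    (hf : DifferentiableAt ℝ f p) (hh : DifferentiableAt ℝ h p) :
    pd a (fun q => f q + h q) p = pd a f p + pd a h p := by
  unfold pd; rw [fderiv_fun_add hf hh]; simp

lemma pd_mul {f h : (Fin 2 → ℝ) → ℝ} {p : Fin 2 → ℝ} (a : Fin 2)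
    (hf : DifferentiableAt ℝ f p) (hh : DifferentiableAt ℝ h p) :
    pd a (fun q => f q * h q) p = pd a f p * h p + f p * pd a h p := by
  unfold pd; rw [fderiv_fun_mul hf hh]; simp [smul_eq_mul]; ring

lemma pd_mul_add_mul {f1 f2 f3 f4 : (Fin 2 → ℝ) → ℝ} {p : Fin 2 → ℝ} (a : Fin 2)
    (h1 : DifferentiableAt ℝ f1 p) (h2 : DifferentiableAt ℝ f2 p)
    (h3 : DifferentiableAt ℝ f3 p) (h4 : DifferentiableAt ℝ f4 p) :
    pd a (fun q => f1 q * f2 q + f3 q * f4 q) p =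
      pd a f1 p * f2 p + f1 p * pd a f2 p + pd a f3 p * f4 p + f3 p * pd a f4 p := by
  rw [pd_add (f := fun q => f1 q * f2 q) (h := fun q => f3 q * f4 q) a (h1.mul h2) (h3.mul h4), pd_mul a h1 h2, pd_mul a h3 h4]; ring

lemma pd_two_mul_sub_const {f h : (Fin 2 → ℝ) → ℝ} {p : Fin 2 → ℝ} (a : Fin 2) (C : ℝ)
    (hf : DifferentiableAt ℝ f p) (hh : DifferentiableAt ℝ h p) :
    pd a (fun q => 2 * (f q * h q) - C) p = 2 * pd a f p * h p + 2 * f p * pd a h p := by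
  unfold pd
  rw [fderiv_fun_sub (f := fun q => 2 * (f q * h q)) (g := fun _ => C) ((hf.mul hh).const_mul 2) (differentiableAt_const C)]
  rw [fderiv_const_mul (a := fun q => f q * h q) (hf.mul hh), fderiv_fun_mul hf hh, fderiv_fun_const]
  simp [smul_eq_mul]; ring

/-- For a unit covector field `u` (with `uᵀg⁻¹u = 1`) and `k = 2uuᵀ − g`:
`Σ_b u^b ∇_b u_a − (Σ_b ∇_b u^b) u_a = −½ Σ_b k^b_a (div k)_b`. -/
theorem unit_covector_identity (U : Set (Fin 2 → ℝ)) (hU : IsOpen U)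
    (g : (Fin 2 → ℝ) → Matrix (Fin 2) (Fin 2) ℝ)
    (hgs : ∀ a b : Fin 2, ContDiffOn ℝ (⊤ : ℕ∞) (fun p => g p a b) U)
    (hgpd : ∀ p ∈ U, (g p).PosDef)
    (u : (Fin 2 → ℝ) → Fin 2 → ℝ)
    (hus : ∀ a : Fin 2, ContDiffOn ℝ (⊤ : ℕ∞) (fun p => u p a) U)
    (hunit : ∀ p ∈ U, u p ⬝ᵥ (g p)⁻¹.mulVec (u p) = 1)
    (k : (Fin 2 → ℝ) → Matrix (Fin 2) (Fin 2) ℝ)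
    (hk : ∀ p, k p = (2 : ℝ) • Matrix.vecMulVec (u p) (u p) - g p)
    (Γ : (Fin 2 → ℝ) → Fin 2 → Fin 2 → Fin 2 → ℝ)
    (hΓ : ∀ p c a b, Γ p c a b = (1/2) * ∑ d, (g p)⁻¹ c d *
      (pd a (fun q => g q d b) p + pd b (fun q => g q d a) p - pd d (fun q => g q a b) p))
    -- the contravariant components `u^a = (g⁻¹u)^a`
    (uup : (Fin 2 → ℝ) → Fin 2 → ℝ)
    (huup : ∀ p, uup p = (g p)⁻¹.mulVec (u p))
    -- the mixed tensor `k^a_b`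
    (kmix : (Fin 2 → ℝ) → Matrix (Fin 2) (Fin 2) ℝ)
    (hkmix : ∀ p, kmix p = (g p)⁻¹ * k p)
    -- the covariant divergence `(div k)_b`
    (divk : (Fin 2 → ℝ) → Fin 2 → ℝ)
    (hdivk : ∀ p b, divk p b = ∑ c, (pd c (fun q => kmix q c b) p
      + ∑ d, Γ p c c d * kmix p d b - ∑ d, Γ p d c b * kmix p c d)) :
    ∀ a : Fin 2, ∀ p ∈ U,
      (∑ b, uup p b * (pd b (fun q => u q a) p - ∑ c, Γ p c b a * u p c))
        - (∑ b, (pd b (fun q => uup q b) p + ∑ c, Γ p b b c * uup p c)) * u p a =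
      -(1/2) * ∑ b, kmix p b a * divk p b := by
  intro a p hp
  -- basic differentiability
  have hgd : ∀ i j : Fin 2, DifferentiableAt ℝ (fun q => g q i j) p := fun i j =>
    ((hgs i j).contDiffAt (hU.mem_nhds hp)).differentiableAt (by simp)
  have hud : ∀ i : Fin 2, DifferentiableAt ℝ (fun q => u q i) p := fun i =>
    ((hus i).contDiffAt (hU.mem_nhds hp)).differentiableAt (by simp)
  have hdet_pos : ∀ q ∈ U, 0 < (g q).det := fun q hq => (hgpd q hq).det_pos
  have hdetU : ∀ q ∈ U, IsUnit (g q).det := fun q hq =>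
    isUnit_iff_ne_zero.mpr (ne_of_gt (hdet_pos q hq))
  -- symmetry
  have hsymE : ∀ q ∈ U, ∀ i j : Fin 2, g q i j = g q j i := by
    intro q hq i j
    have h := (hgpd q hq).isHermitian
    have h2 := congrFun (congrFun h j) i
    simpa [Matrix.conjTranspose_apply] using h2
  have hgsym : g p 1 0 = g p 0 1 := hsymE p hp 1 0
  have hdgsym : ∀ c : Fin 2, pd c (fun q => g q 1 0) p = pd c (fun q => g q 0 1) p :=
    fun c => pd_eqOn hU hp c (fun q hq => hsymE q hq 1 0)
  have hHsym : (g p)⁻¹ 1 0 = (g p)⁻¹ 0 1 := by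
    have h1 : ((g p)ᵀ)⁻¹ = (g p)⁻¹ := by
      have : (g p)ᵀ = g p := by ext i j; exact hsymE p hp j i
      rw [this]
    calc (g p)⁻¹ 1 0 = ((g p)⁻¹)ᵀ 0 1 := rfl
      _ = ((g p)ᵀ)⁻¹ 0 1 := by rw [Matrix.transpose_nonsing_inv]
      _ = (g p)⁻¹ 0 1 := by rw [h1]
  -- differentiability of the inverse metric entries
  have hdetfd : DifferentiableAt ℝ (fun q => g q 0 0 * g q 1 1 - g q 0 1 * g q 1 0) p :=
    ((hgd 0 0).mul (hgd 1 1)).sub ((hgd 0 1).mul (hgd 1 0))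
  have hdetne : g p 0 0 * g p 1 1 - g p 0 1 * g p 1 0 ≠ 0 := by
    have h := hdet_pos p hp
    rw [Matrix.det_fin_two] at h
    exact ne_of_gt h
  have hHfun : ∀ i j : Fin 2, (fun q => (g q)⁻¹ i j) =
      fun q => (g q 0 0 * g q 1 1 - g q 0 1 * g q 1 0)⁻¹ *
        (!![g q 1 1, -g q 0 1; -g q 1 0, g q 0 0] i j) := by
    intro i j; funext q
    rw [Matrix.inv_def, Matrix.adjugate_fin_two, Matrix.det_fin_two, Ring.inverse_eq_inv,
      Matrix.smul_apply, smul_eq_mul]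
  have hHd : ∀ i j : Fin 2, DifferentiableAt ℝ (fun q => (g q)⁻¹ i j) p := by
    intro i j
    rw [hHfun i j]
    apply (hdetfd.inv hdetne).mul
    fin_cases i <;> fin_cases j <;> simp only [Matrix.cons_val', Matrix.cons_val_zero,
      Matrix.cons_val_one, Matrix.head_cons, Matrix.head_fin_const, Matrix.empty_val',
      Matrix.cons_val_fin_one]
    · exact hgd 1 1
    · exact (hgd 0 1).neg
    · exact (hgd 1 0).neg
    · exact hgd 0 0
  -- value relations for the inverse
  have hHGval : ∀ i l : Fin 2, (g p)⁻¹ i 0 * g p 0 l + (g p)⁻¹ i 1 * g p 1 l =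
      if i = l then 1 else 0 := by
    intro i l
    have h1 := Matrix.nonsing_inv_mul (g p) (hdetU p hp)
    have h2 := congrFun (congrFun h1 i) l
    simpa [Matrix.mul_apply, Fin.sum_univ_two, Matrix.one_apply] using h2
  -- the derivative relation for the inverse entries
  have E : ∀ c k l : Fin 2,
      pd c (fun q => g q k 0) p * (g p)⁻¹ 0 l + g p k 0 * pd c (fun q => (g q)⁻¹ 0 l) p
      + pd c (fun q => g q k 1) p * (g p)⁻¹ 1 l + g p k 1 * pd c (fun q => (g q)⁻¹ 1 l) p
      = 0 := by
    intro c k l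
    have heq : ∀ q ∈ U,
        g q k 0 * (g q)⁻¹ 0 l + g q k 1 * (g q)⁻¹ 1 l = (if k = l then (1:ℝ) else 0) := by
      intro q hq
      have h1 := Matrix.mul_nonsing_inv (g q) (hdetU q hq)
      have h2 := congrFun (congrFun h1 k) l
      simpa [Matrix.mul_apply, Fin.sum_univ_two, Matrix.one_apply] using h2
    have h3 : pd c (fun q => g q k 0 * (g q)⁻¹ 0 l + g q k 1 * (g q)⁻¹ 1 l) p = 0 := by
      calc pd c (fun q => g q k 0 * (g q)⁻¹ 0 l + g q k 1 * (g q)⁻¹ 1 l) p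
          = pd c (fun _ => if k = l then (1:ℝ) else 0) p := pd_eqOn hU hp c heq
        _ = 0 := pd_const _ _ _
    have h4 := pd_mul_add_mul c (hgd k 0) (hHd 0 l) (hgd k 1) (hHd 1 l)
    linarith [h3, h4]
  have h_dH : ∀ c i j : Fin 2, pd c (fun q => (g q)⁻¹ i j) p =
      -((g p)⁻¹ i 0 * (pd c (fun q => g q 0 0) p * (g p)⁻¹ 0 j
          + pd c (fun q => g q 0 1) p * (g p)⁻¹ 1 j)
        + (g p)⁻¹ i 1 * (pd c (fun q => g q 1 0) p * (g p)⁻¹ 0 j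
          + pd c (fun q => g q 1 1) p * (g p)⁻¹ 1 j)) := by
    intro c i j
    have E0 := E c 0 j
    have E1 := E c 1 j
    fin_cases i
    · simp only [Fin.mk_zero, Fin.mk_one]
      have HG0 : (g p)⁻¹ 0 0 * g p 0 0 + (g p)⁻¹ 0 1 * g p 1 0 = 1 := by
        simpa using hHGval 0 0
      have HG1 : (g p)⁻¹ 0 0 * g p 0 1 + (g p)⁻¹ 0 1 * g p 1 1 = 0 := by
        simpa using hHGval 0 1
      linear_combination (g p)⁻¹ 0 0 * E0 + (g p)⁻¹ 0 1 * E1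
        - pd c (fun q => (g q)⁻¹ 0 j) p * HG0 - pd c (fun q => (g q)⁻¹ 1 j) p * HG1
    · simp only [Fin.mk_zero, Fin.mk_one]
      have HG0 : (g p)⁻¹ 1 0 * g p 0 0 + (g p)⁻¹ 1 1 * g p 1 0 = 0 := by
        simpa using hHGval 1 0
      have HG1 : (g p)⁻¹ 1 0 * g p 0 1 + (g p)⁻¹ 1 1 * g p 1 1 = 1 := by
        simpa using hHGval 1 1
      linear_combination (g p)⁻¹ 1 0 * E0 + (g p)⁻¹ 1 1 * E1
        - pd c (fun q => (g q)⁻¹ 0 j) p * HG0 - pd c (fun q => (g q)⁻¹ 1 j) p * HG1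
  -- contravariant components
  have h_uup_ext : ∀ i : Fin 2, (fun q => uup q i) =
      fun q => (g q)⁻¹ i 0 * u q 0 + (g q)⁻¹ i 1 * u q 1 := by
    intro i; funext q
    rw [huup q]
    simp [Matrix.mulVec, dotProduct, Fin.sum_univ_two]
  have hupd : ∀ i : Fin 2, DifferentiableAt ℝ (fun q => uup q i) p := by
    intro i
    rw [h_uup_ext i]
    exact ((hHd i 0).mul (hud 0)).add ((hHd i 1).mul (hud 1))
  have h_uupp : ∀ i : Fin 2, uup p i = (g p)⁻¹ i 0 * u p 0 + (g p)⁻¹ i 1 * u p 1 :=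
    fun i => congrFun (h_uup_ext i) p
  have h_duup : ∀ b i : Fin 2, pd b (fun q => uup q i) p =
      pd b (fun q => (g q)⁻¹ i 0) p * u p 0 + (g p)⁻¹ i 0 * pd b (fun q => u q 0) p
      + pd b (fun q => (g q)⁻¹ i 1) p * u p 1 + (g p)⁻¹ i 1 * pd b (fun q => u q 1) p := by
    intro b i
    rw [h_uup_ext i]
    exact pd_mul_add_mul b (hHd i 0) (hud 0) (hHd i 1) (hud 1)
  -- the mixed tensor entrywise
  have h_km_on : ∀ q ∈ U, ∀ i j : Fin 2,
      kmix q i j = 2 * (uup q i * u q j) - (if i = j then (1:ℝ) else 0) := by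
    intro q hq i j
    have h1 := Matrix.nonsing_inv_mul (g q) (hdetU q hq)
    have h2 : (g q)⁻¹ i 0 * g q 0 j + (g q)⁻¹ i 1 * g q 1 j = if i = j then 1 else 0 := by
      have h3 := congrFun (congrFun h1 i) j
      simpa [Matrix.mul_apply, Fin.sum_univ_two, Matrix.one_apply] using h3
    rw [hkmix, hk, huup]
    simp only [Matrix.mul_apply, Matrix.sub_apply, Matrix.smul_apply, Matrix.vecMulVec_apply,
      Fin.sum_univ_two, smul_eq_mul, Matrix.mulVec, dotProduct]
    linear_combination -h2
  have h_km00 : kmix p 0 0 = 2 * (uup p 0 * u p 0) - 1 := by simpa using h_km_on p hp 0 0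
  have h_km01 : kmix p 0 1 = 2 * (uup p 0 * u p 1) := by simpa using h_km_on p hp 0 1
  have h_km10 : kmix p 1 0 = 2 * (uup p 1 * u p 0) := by simpa using h_km_on p hp 1 0
  have h_km11 : kmix p 1 1 = 2 * (uup p 1 * u p 1) - 1 := by simpa using h_km_on p hp 1 1
  have h_pdkm : ∀ c i j : Fin 2, pd c (fun q => kmix q i j) p =
      2 * pd c (fun q => uup q i) p * u p j + 2 * uup p i * pd c (fun q => u q j) p := by
    intro c i j
    calc pd c (fun q => kmix q i j) p
        = pd c (fun q => 2 * (uup q i * u q j) - (if i = j then (1:ℝ) else 0)) p :=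
          pd_eqOn hU hp c (fun q hq => h_km_on q hq i j)
      _ = _ := pd_two_mul_sub_const c _ (hupd i) (hud j)
  -- the unit-norm constraint and its derivative
  have hFon : ∀ q ∈ U, u q 0 * uup q 0 + u q 1 * uup q 1 = 1 := by
    intro q hq
    have h1 := hunit q hq
    rw [show (g q)⁻¹.mulVec (u q) = uup q from (huup q).symm] at h1
    simpa [dotProduct, Fin.sum_univ_two] using h1
  have hF : u p 0 * uup p 0 + u p 1 * uup p 1 = 1 := hFon p hp
  have hdF : ∀ c : Fin 2,
      pd c (fun q => u q 0) p * uup p 0 + u p 0 * pd c (fun q => uup q 0) p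
      + pd c (fun q => u q 1) p * uup p 1 + u p 1 * pd c (fun q => uup q 1) p = 0 := by
    intro c
    have h0 : pd c (fun q => u q 0 * uup q 0 + u q 1 * uup q 1) p = 0 := by
      calc pd c (fun q => u q 0 * uup q 0 + u q 1 * uup q 1) p
          = pd c (fun _ => (1:ℝ)) p := pd_eqOn hU hp c hFon
        _ = 0 := pd_const _ _ _
    have hexp := pd_mul_add_mul c (hud 0) (hupd 0) (hud 1) (hupd 1)
    linarith [h0, hexp]
  have hdF0 := hdF 0
  have hdF1 := hdF 1
  simp only [h_duup, h_dH, h_uupp, hgsym, hHsym, hdgsym] at hdF0 hdF1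
  simp only [h_uupp, hHsym] at hF
  -- main computation
  fin_cases a
  · simp only [Fin.mk_zero, Fin.mk_one, hdivk, hΓ, Fin.sum_univ_two, h_pdkm, h_km00, h_km01, h_km10, h_km11,
      h_duup, h_dH, h_uupp]
    simp only [hgsym, hHsym, hdgsym]
    linear_combination (norm := ring1) ((2:ℝ) * ((g p)⁻¹ 1 1) * (u p 0) * (pd 1 (fun q => u q 1) p) + (-1:ℝ) * ((g p)⁻¹ 1 1) * ((g p)⁻¹ 1 1) * (pd 1 (fun q => g q 1 1) p) * (u p 0) * (u p 1) + (2:ℝ) * ((g p)⁻¹ 0 1) * (u p 0) * (pd 1 (fun q => u q 0) p) + (2:ℝ) * ((g p)⁻¹ 0 1) * (u p 0) * (pd 0 (fun q => u q 1) p) + (-1:ℝ) * ((g p)⁻¹ 0 1) * ((g p)⁻¹ 1 1) * (pd 1 (fun q => g q 1 1) p) * (u p 0) * (u p 0) + (-2:ℝ) * ((g p)⁻¹ 0 1) * ((g p)⁻¹ 1 1) * (pd 1 (fun q => g q 0 1) p) * (u p 0) * (u p 1) + (-1:ℝ) * ((g p)⁻¹ 0 1) * ((g p)⁻¹ 1 1)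 * (pd 0 (fun q => g q 1 1) p) * (u p 0) * (u p 1) + (-2:ℝ) * ((g p)⁻¹ 0 1) * ((g p)⁻¹ 0 1) * (pd 1 (fun q => g q 0 0) p) * (u p 0) * (u p 1) + (-2:ℝ) * ((g p)⁻¹ 0 1) * ((g p)⁻¹ 0 1) * (pd 0 (fun q => g q 1 1) p) * (u p 0) * (u p 0) + (2:ℝ) * ((g p)⁻¹ 0 0) * (u p 0) * (pd 0 (fun q => u q 0) p) + (-2:ℝ) * ((g p)⁻¹ 0 0) * ((g p)⁻¹ 1 1) * (pd 1 (fun q => g q 0 1) p) * (u p 0) * (u p 0) + (1:ℝ) * ((g p)⁻¹ 0 0) * ((g p)⁻¹ 1 1) * (pd 1 (fun q => g q 0 0) p) * (u p 0) * (u p 1) + (1:ℝ) * ((g p)⁻¹ 0 0) * ((g p)⁻¹ 1 1) * (pd 0 (fun q => g q 1 1) p) * (u p 0) * (u p 0) + (-2:ℝ) * ((g p)⁻¹ 0 0) * ((g p)⁻¹ 1 1) * (pd 0 (fun q => g q 0 1) p) * (u p 0) * (u p 1) + (-1:ℝ) * ((g p)⁻¹ 0 0) * ((g p)⁻¹ 0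 1) * (pd 1 (fun q => g q 0 0) p) * (u p 0) * (u p 0) + (-2:ℝ) * ((g p)⁻¹ 0 0) * ((g p)⁻¹ 0 1) * (pd 0 (fun q => g q 0 1) p) * (u p 0) * (u p 0) + (-1:ℝ) * ((g p)⁻¹ 0 0) * ((g p)⁻¹ 0 1) * (pd 0 (fun q => g q 0 0) p) * (u p 0) * (u p 1) + (-1:ℝ) * ((g p)⁻¹ 0 0) * ((g p)⁻¹ 0 0) * (pd 0 (fun q => g q 0 0) p) * (u p 0) * (u p 0)) * hF + ((1:ℝ) * ((g p)⁻¹ 0 1) * (u p 0) * (u p 1) + (1:ℝ) * ((g p)⁻¹ 0 0) * (u p 0) * (u p 0)) * hdF0 + ((1:ℝ) * ((g p)⁻¹ 1 1) * (u p 0) * (u p 1) + (1:ℝ) * ((g p)⁻¹ 0 1) * (u p 0) * (u p 0)) * hdF1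
  · simp only [Fin.mk_zero, Fin.mk_one, hdivk, hΓ, Fin.sum_univ_two, h_pdkm, h_km00, h_km01, h_km10, h_km11,
      h_duup, h_dH, h_uupp]
    simp only [hgsym, hHsym, hdgsym]
    linear_combination (norm := ring1) ((2:ℝ) * ((g p)⁻¹ 1 1) * (u p 1) * (pd 1 (fun q => u q 1) p) + (-1:ℝ) * ((g p)⁻¹ 1 1) * ((g p)⁻¹ 1 1) * (pd 1 (fun q => g q 1 1) p) * (u p 1) * (u p 1) + (2:ℝ) * ((g p)⁻¹ 0 1) * (u p 1) * (pd 1 (fun q => u q 0) p) + (2:ℝ) * ((g p)⁻¹ 0 1) * (u p 1) * (pd 0 (fun q => u q 1) p) + (-1:ℝ) * ((g p)⁻¹ 0 1) * ((g p)⁻¹ 1 1) * (pd 1 (fun q => g q 1 1) p) * (u p 0) * (u p 1) + (-2:ℝ) * ((g p)⁻¹ 0 1) * ((g p)⁻¹ 1 1) * (pd 1 (fun q => g q 0 1) p) * (u p 1) * (u p 1) + (-1:ℝ) * ((g p)⁻¹ 0 1) * ((g p)⁻¹ 1 1) * (pd 0 (fun q => g q 1 1) p) * (u p 1) * (u p 1)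 + (-2:ℝ) * ((g p)⁻¹ 0 1) * ((g p)⁻¹ 0 1) * (pd 1 (fun q => g q 0 0) p) * (u p 1) * (u p 1) + (-2:ℝ) * ((g p)⁻¹ 0 1) * ((g p)⁻¹ 0 1) * (pd 0 (fun q => g q 1 1) p) * (u p 0) * (u p 1) + (2:ℝ) * ((g p)⁻¹ 0 0) * (u p 1) * (pd 0 (fun q => u q 0) p) + (-2:ℝ) * ((g p)⁻¹ 0 0) * ((g p)⁻¹ 1 1) * (pd 1 (fun q => g q 0 1) p) * (u p 0) * (u p 1) + (1:ℝ) * ((g p)⁻¹ 0 0) * ((g p)⁻¹ 1 1) * (pd 1 (fun q => g q 0 0) p) * (u p 1) * (u p 1) + (1:ℝ) * ((g p)⁻¹ 0 0) * ((g p)⁻¹ 1 1) * (pd 0 (fun q => g q 1 1) p) * (u p 0) * (u p 1) + (-2:ℝ) * ((g p)⁻¹ 0 0) * ((g p)⁻¹ 1 1) * (pd 0 (fun q => g q 0 1) p) * (u p 1) * (u p 1) + (-1:ℝ) * ((g p)⁻¹ 0 0) * ((g p)⁻¹ 0 1) * (pd 1 (fun q => g q 0 0) p) * (u p 0) * (u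 p 1) + (-2:ℝ) * ((g p)⁻¹ 0 0) * ((g p)⁻¹ 0 1) * (pd 0 (fun q => g q 0 1) p) * (u p 0) * (u p 1) + (-1:ℝ) * ((g p)⁻¹ 0 0) * ((g p)⁻¹ 0 1) * (pd 0 (fun q => g q 0 0) p) * (u p 1) * (u p 1) + (-1:ℝ) * ((g p)⁻¹ 0 0) * ((g p)⁻¹ 0 0) * (pd 0 (fun q => g q 0 0) p) * (u p 0) * (u p 1)) * hF + ((1:ℝ) * ((g p)⁻¹ 0 1) * (u p 1) * (u p 1) + (1:ℝ) * ((g p)⁻¹ 0 0) * (u p 0) * (u p 1)) * hdF0 + ((1:ℝ) * ((g p)⁻¹ 1 1) * (u p 1) * (u p 1) + (1:ℝ) * ((g p)⁻¹ 0 1) * (u p 0) * (u p 1)) * hdF1
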